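/- Let g ≥ 2 be an integer and p a prime with gcd(p, g) = 1. Then there is no constant C such that every bounded subset B ⊆ ℤ (with respect to the word metric d_g) has μ_p^{-1}(B) bounded, where μ_p(k) = p·k. In particular, multiplication by p is not a coarse equivalence of (ℤ, d_g). -/

import Mathlib

/-- The generating set `S_g = {± g^k : k ∈ ℕ}` in `ℤ`. -/
def Sg (g : ℤ) : Set ℤ := {x | ∃ n : ℕ, x = g ^ n ∨ x = -g ^ n}

/-- The word length of `k` with respect to `S_g`. -/
noncomputable def wlen (g : ℤ) (k : ℤ) : ℕ :=
  sInf {m | ∃ l : List ℤ, (∀ x ∈ l, x ∈ Sg g) ∧ l.length = m ∧ l.sum = k}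

/-- The word metric `d_g(m,n) = ℓ_g(m - n)`. -/
noncomputable def dg (g : ℤ) (m n : ℤ) : ℕ := wlen g (m - n)

/-- A subset of `ℤ` is bounded for `d_g` if it has finite `d_g`-diameter. -/
def DgBounded (g : ℤ) (B : Set ℤ) : Prop :=
  ∃ C : ℕ, ∀ x ∈ B, ∀ y ∈ B, dg g x y ≤ C

/-!
By Fermat, `p ∣ g ^ (d * m) - 1` for `d = p - 1`, so with `t = ⌈p / 2⌉` the set
`B = {t (g ^ (d m) - 1)}` has diameter at most `2 t`, and its preimage contains
`k m = t (g ^ (d m) - 1) / p`. Since `p` is invertible modulo `g`, for `M ≤ m` we get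
`k m ≡ k M (mod g ^ (d M))`, and `k M ≈ (t / p) g ^ (d M)` lies in the middle half of
`[0, g ^ (d M))`. A word of length `< T` in the letters `± g ^ e` whose sum has such a residue
modulo `g ^ N` must contain a letter of absolute value in `[g ^ (N - T), g ^ N)`: the other letters
contribute either a multiple of `g ^ N` or less than `g ^ (N - 2)` in total. For `T` levels `N`
spaced at least `T` apart these letters are distinct, so the word length of `k m` is unbounded.
-/

lemma wlen_le_length {g k : ℤ} {l : List ℤ} (hl : ∀ x ∈ l, x ∈ Sg g) (hsum : l.sum = k) :
    wlen g k ≤ l.length :=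
  Nat.sInf_le ⟨l, hl, rfl, hsum⟩

lemma exists_list_length_eq_wlen (g k : ℤ) :
    ∃ l : List ℤ, (∀ x ∈ l, x ∈ Sg g) ∧ l.length = wlen g k ∧ l.sum = k := by
  refine Nat.sInf_mem (s := {m | ∃ l : List ℤ, (∀ x ∈ l, x ∈ Sg g) ∧ l.length = m ∧ l.sum = k}) ?_
  obtain ⟨u, hu, hk⟩ : ∃ u ∈ Sg g, k = k.natAbs * u := by
    rcases Int.natAbs_eq k with hk | hk
    · exact ⟨1, ⟨0, Or.inl (pow_zero g).symm⟩, by simpa using hk⟩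
    · exact ⟨-1, ⟨0, Or.inr (by simp)⟩, by simpa using hk⟩
  refine ⟨k.natAbs, List.replicate k.natAbs u, fun x hx => ?_, by simp, ?_⟩
  · rwa [List.eq_of_mem_replicate hx]
  · rw [List.sum_replicate, nsmul_eq_mul, ← hk]

lemma wlen_mul_pow_sub_mul_pow_le (g : ℤ) (t a b : ℕ) :
    wlen g (t * g ^ a - t * g ^ b) ≤ 2 * t := by
  have hl : ∀ x ∈ List.replicate t (g ^ a) ++ List.replicate t (-g ^ b), x ∈ Sg g := by
    intro x hx
    rcases List.mem_append.mp hx with hx | hx <;> rw [List.eq_of_mem_replicate hx]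
    exacts [⟨a, Or.inl rfl⟩, ⟨b, Or.inr rfl⟩]
  have := wlen_le_length hl (k := t * g ^ a - t * g ^ b) (by simp [sub_eq_add_neg])
  simpa [two_mul] using this

lemma exists_eq_pow_abs_of_mem_Sg {g x : ℤ} (hg : 0 ≤ g) (hx : x ∈ Sg g) :
    ∃ e : ℕ, |x| = g ^ e := by
  obtain ⟨e, rfl | rfl⟩ := hx <;> exact ⟨e, by simp [abs_of_nonneg (pow_nonneg hg e)]⟩

lemma List.exists_sum_modEq_abs_le {q b : ℤ} (hb : 0 ≤ b) :
    ∀ l : List ℤ, (∀ x ∈ l, |x| ≤ b ∨ q ∣ x) → ∃ s, l.sum ≡ s [ZMOD q] ∧ |s| ≤ l.length * b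
  | [], _ => ⟨0, rfl, by simp⟩
  | x :: l, h => by
    obtain ⟨s, hs, hsb⟩ := exists_sum_modEq_abs_le hb l fun y hy => h y (mem_cons_of_mem _ hy)
    rw [sum_cons, length_cons, Nat.cast_succ, add_one_mul]
    rcases h x mem_cons_self with hx | hx
    · exact ⟨x + s, hs.add_left x, (abs_add_le _ _).trans (by linarith)⟩
    · refine ⟨s, ?_, by linarith⟩
      simpa using (Int.modEq_zero_iff_dvd.mpr hx).add hs

open Function in
lemma List.le_length_of_pairwise_disjoint {α : Type*} {T : ℕ} (l : List α) (S : Fin T → Set α)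
    (hS : _root_.Pairwise (_root_.Disjoint on S)) (h : ∀ j, ∃ x ∈ l, x ∈ S j) : T ≤ l.length := by
  classical
  choose f hfl hfS using h
  have hinj : Set.InjOn f (Finset.univ : Finset (Fin T)) := by
    intro j _ j' _ hjj'
    by_contra hne
    exact Set.disjoint_left.mp (hS hne) (hfS j) (hjj' ▸ hfS j')
  simpa using (Finset.card_le_card_of_injOn f (fun j _ => by simpa using hfl j) hinj).trans
    l.toFinset_card_le

lemma exists_mem_abs_mem_Ico {g : ℤ} (hg : 2 ≤ g) {l : List ℤ} (hl : ∀ x ∈ l, x ∈ Sg g)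
    {a N : ℕ} (hsum : l.sum % g ^ N ∈ Set.Ioo (l.length * g ^ a) (g ^ N - l.length * g ^ a)) :
    ∃ x ∈ l, |x| ∈ Set.Ico (g ^ (a + 1)) (g ^ N) := by
  simp only [Set.mem_Ioo, Set.mem_Ico] at hsum ⊢
  by_contra! hnone
  have hsplit : ∀ x ∈ l, |x| ≤ g ^ a ∨ g ^ N ∣ x := by
    intro x hx
    obtain ⟨e, he⟩ := exists_eq_pow_abs_of_mem_Sg (by linarith) (hl x hx)
    rcases Nat.lt_or_ge a e with hae | hea
    · have hNe : g ^ N ≤ g ^ e := he ▸ hnone x hx (he ▸ pow_le_pow_right₀ (by linarith) hae)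
      rw [pow_le_pow_iff_right₀ (by linarith)] at hNe
      exact Or.inr ((dvd_abs _ _).mp (he ▸ pow_dvd_pow g hNe))
    · exact Or.inl (he ▸ pow_le_pow_right₀ (by linarith) hea)
  obtain ⟨s, hs, hsb⟩ := l.exists_sum_modEq_abs_le (pow_nonneg (by linarith) a) hsplit
  have hdvd : g ^ N ∣ l.sum % g ^ N - s := ((Int.mod_modEq _ _).trans hs).symm.dvd
  obtain ⟨hs_lo, hs_hi⟩ := abs_le.mp hsb
  have := Int.le_of_dvd (by linarith) hdvd
  linarith

lemma le_wlen_of_emod_pow {g k : ℤ} (hg : 2 ≤ g) {T : ℕ} (N : Fin T → ℕ) (hN : ∀ j, T + 1 ≤ N j)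
    (hgap : ∀ j j', j < j' → N j + T ≤ N j')
    (hmid : ∀ j, k % g ^ N j ∈ Set.Ioo (g ^ (N j - 2)) (g ^ N j - g ^ (N j - 2))) :
    T ≤ wlen g k := by
  by_contra! hlt
  obtain ⟨l, hl, hlen, rfl⟩ := exists_list_length_eq_wlen g k
  have hlen_le : (l.length : ℤ) ≤ g ^ (T - 1) := calc
    (l.length : ℤ) ≤ ((2 ^ (T - 1) : ℕ) : ℤ) := by
      have := @Nat.lt_two_pow_self (T - 1)
      exact_mod_cast (by omega : l.length ≤ 2 ^ (T - 1))
    _ ≤ g ^ (T - 1) := by push_cast; exact pow_le_pow_left₀ (by norm_num) hg _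
  refine absurd (l.le_length_of_pairwise_disjoint
    (fun j => abs ⁻¹' Set.Ico (g ^ (N j - T)) (g ^ N j)) ?_ fun j => ?_) (by omega)
  · refine (pairwise_disjoint_on _).mpr fun j j' hjj' => Set.disjoint_left.mpr ?_
    rintro x ⟨-, hx⟩ ⟨hx', -⟩
    have : g ^ N j ≤ g ^ (N j' - T) :=
      pow_le_pow_right₀ (by linarith) (by have := hgap j j' hjj'; omega)
    linarith
  · have hNj := hN j
    have hsmall : (l.length : ℤ) * g ^ (N j - T - 1) ≤ g ^ (N j - 2) := calc
      _ ≤ g ^ (T - 1) * g ^ (N j - T - 1) := by gcongr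
      _ = g ^ (N j - 2) := by rw [← pow_add]; congr 1; omega
    obtain ⟨hlo, hhi⟩ := hmid j
    rw [show N j - T = N j - T - 1 + 1 by omega]
    exact exists_mem_abs_mem_Ico hg hl ⟨by linarith, by linarith⟩

lemma mem_Ioo_of_mul_eq {p t q r s : ℤ} (hp : 0 < p) (ht₁ : p ≤ 2 * t) (ht₂ : 4 * t ≤ 3 * p)
    (hr : p * r = t * (q - 1)) (hs : 1 ≤ s) (hsq : 4 * s ≤ q) : r ∈ Set.Ioo s (q - s) := by
  constructor <;> nlinarith

lemma emod_eq_of_mul_modEq {p q k r t : ℤ} (hcop : IsCoprime p q) (hk : p * k ≡ -t [ZMOD q])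
    (hr : p * r = t * (q - 1)) (hr₀ : 0 ≤ r) (hrq : r < q) : k % q = r := by
  have hkr : p * k ≡ p * r [ZMOD q] := hk.trans (Int.modEq_iff_dvd.mpr ⟨t, by rw [hr]; ring⟩)
  have : q ∣ p * (r - k) := by simpa [mul_sub] using hkr.dvd
  rw [show k % q = r % q from (Int.modEq_iff_dvd.mpr (hcop.symm.dvd_of_dvd_mul_left this)),
    Int.emod_eq_of_lt hr₀ hrq]

lemma emod_pow_mem_Ioo {g p t k r : ℤ} {N N' : ℕ} (hg : 2 ≤ g) (hcop : IsCoprime p g)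
    (hp : 0 < p) (ht₁ : p ≤ 2 * t) (ht₂ : 4 * t ≤ 3 * p) (hN : 2 ≤ N) (hNN' : N ≤ N')
    (hk : p * k = t * (g ^ N' - 1)) (hr : p * r = t * (g ^ N - 1)) :
    k % g ^ N ∈ Set.Ioo (g ^ (N - 2)) (g ^ N - g ^ (N - 2)) := by
  have hs : 1 ≤ g ^ (N - 2) := one_le_pow₀ (by linarith)
  have hsq : 4 * g ^ (N - 2) ≤ g ^ N := by
    rw [show g ^ N = g ^ (N - 2) * g ^ 2 by rw [← pow_add]; congr 1; omega]
    nlinarith [show 4 ≤ g ^ 2 by nlinarith]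
  have hr_mem := mem_Ioo_of_mul_eq hp ht₁ ht₂ hr hs hsq
  have hk' : p * k ≡ -t [ZMOD g ^ N] := by
    refine Int.modEq_iff_dvd.mpr ?_
    rw [show -t - p * k = -t * g ^ N' by rw [hk]; ring]
    exact (pow_dvd_pow g hNN').mul_left _
  rwa [emod_eq_of_mul_modEq hcop.pow_right hk' hr (by linarith [hr_mem.1]) (by linarith [hr_mem.2])]

/-- Multiplication by a prime `p` coprime to `g` is not proper for `d_g`. -/
theorem stmt_7 (g : ℤ) (hg : 2 ≤ g) (p : ℕ) (hp : p.Prime)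
    (hcop : IsCoprime (p : ℤ) g) :
    ¬ ∀ B : Set ℤ, DgBounded g B → DgBounded g ((fun k : ℤ => (p : ℤ) * k) ⁻¹' B) := by
  intro H
  have hp₂ := hp.two_le
  set d := p - 1
  set t := (p + 1) / 2
  have hk : ∀ m, ∃ k : ℤ, p * k = t * (g ^ (d * m) - 1) := fun m => by
    have hfermat : g ^ (d * m) ≡ 1 [ZMOD p] := by
      simpa [pow_mul] using (Int.ModEq.pow_card_sub_one_eq_one hp hcop.symm).pow m
    obtain ⟨k, hk⟩ := hfermat.symm.dvd.mul_left (t : ℤ)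
    exact ⟨k, hk.symm⟩
  choose k hk using hk
  obtain ⟨C, hC⟩ := H {x | ∃ m, x = t * (g ^ (d * m) - 1)} ⟨2 * t, by
    rintro _ ⟨m, rfl⟩ _ ⟨m', rfl⟩
    simpa [dg, mul_sub] using wlen_mul_pow_sub_mul_pow_le g t (d * m) (d * m')⟩
  have hd : 1 ≤ d := by omega
  have hwlen := le_wlen_of_emod_pow hg (k := k ((C + 2) * (C + 1)))
    (fun j : Fin (C + 1) => d * ((C + 2) * (j + 1)))
    (fun j => by nlinarith [Nat.mul_le_mul_left (d * (C + 2)) (Nat.succ_pos j)])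
    (fun j j' hjj' => by nlinarith [Nat.mul_le_mul_left (d * (C + 2)) (Fin.lt_def.mp hjj')])
    fun j => emod_pow_mem_Ioo hg hcop (by omega) (by omega) (by omega)
      (by nlinarith [Nat.mul_le_mul_left (d * (C + 2)) (Nat.succ_pos j)])
      (by nlinarith [Nat.mul_le_mul_left (d * (C + 2)) j.isLt]) (hk _) (hk _)
  have := hC _ ⟨_, hk ((C + 2) * (C + 1))⟩ 0 ⟨0, by simp⟩
  simp only [dg, sub_zero] at this
  omega
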